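/- arXiv:1611.08818 — 2 statements merged into one kernel-verified Lean document; each statement's English description precedes it below -/
import Mathlib

section
/- Let R be a commutative ring and let A', A, B, C', C, D be R-modules. Suppose given R-linear maps α'₁ : A' → B, α'₂ : A' → C', α₁ : A → B, α₂ : A → C, β₁ : B → D, β'₂ : C' → D, β₂ : C → D, and R-linear maps γ : A' → A, ψ : B → B, φ : C' → C, τ : D → D such that: (a) the sequence 0 → A' → B ⊕ C' → D → 0 is exact, where the first map is a' ↦ (α'₁ a', α'₂ a') and the second map is (b, c') ↦ β₁ b + β'₂ c'; (b) the sequence 0 → A → B ⊕ C → D → 0 is exact, where the first map is a ↦ (α₁ a, α₂ a) and the second map is (b, c) ↦ β₁ b + β₂ c; (c) α₁ ∘ γ = ψ ∘ α'₁, α₂ ∘ γ = φ ∘ α'₂, τ ∘ β₁ = β₁ ∘ ψ, and τ ∘ β'₂ = β₂ ∘ φ; (d) for every d in the kernel of τ there exist b in the kernel of ψ and c' in the kernel of φ with d = β₁ b + β'₂ c'; (e) the image of α₁ is contained in the image of ψ; (f) the image of β₂ is contained in the image of τ. Then α₂ maps the image of γ into the image of φ, and the induced R-linear map A/Im(γ)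 → C/Im(φ) is an isomorphism. -/
/-!
The map `A/Im γ → C/Im φ` induced by `α₂` is surjective: for `c : C` write `β₂ c = τ d` by (f)
and `d = β₁ b + β'₂ c'` by (a); then `(ψ b, φ c' - c)` is killed by the row (b), hence comes from
some `a : A`, and `c = φ c' - α₂ a`. It is injective by the snake-lemma chase: if `α₂ a = φ c'`,
pick `ψ b = α₁ a` by (e); then `β₁ b + β'₂ c'` lies in `ker τ`, so by (d) it equals some
`β₁ b₀ + β'₂ c'₀` with `b₀ ∈ ker ψ`, `c'₀ ∈ ker φ`, and exactness of (a) produces `a'` such that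
`γ a'` and `a` have the same image in `B × C`, whence `γ a' = a` by (b).
-/

open LinearMap Submodule

section Exactness

variable {R : Type*} [Semiring R] {A B C D : Type*}
  [AddCommMonoid A] [Module R A] [AddCommMonoid B] [Module R B]
  [AddCommMonoid C] [Module R C] [AddCommMonoid D] [Module R D]
  {u : A →ₗ[R] B} {v : A →ₗ[R] C} {f : B →ₗ[R] D} {g : C →ₗ[R] D}

theorem add_apply_eq_zero_of_ker_coprod_eq_range_prod
    (hexact : ker (coprod f g) = range (u.prod v)) (a : A) :
    f (u a) + g (v a) = 0 := by
  have : (u a, v a) ∈ ker (coprod f g) := hexact ▸ ⟨a, rfl⟩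
  simpa using this

theorem exists_apply_eq_of_ker_coprod_eq_range_prod
    (hexact : ker (coprod f g) = range (u.prod v)) {b : B} {c : C} (h : f b + g c = 0) :
    ∃ a, u a = b ∧ v a = c := by
  have : (b, c) ∈ range (u.prod v) := hexact ▸ by simpa using h
  obtain ⟨a, ha⟩ := this
  exact ⟨a, congrArg Prod.fst ha, congrArg Prod.snd ha⟩

end Exactness

theorem Submodule.mapQ_bijective {R M N : Type*} [Ring R] [AddCommGroup M] [Module R M]
    [AddCommGroup N] [Module R N] {p : Submodule R M} {q : Submodule R N} {f : M →ₗ[R] N}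
    (h : p ≤ comap f q) (hinj : comap f q ≤ p) (hsurj : q ⊔ range f = ⊤) :
    Function.Bijective (p.mapQ q f h) := by
  refine ⟨?_, ?_⟩
  · rw [← ker_eq_bot, ker_mapQ, eq_bot_iff, map_le_iff_le_comap, comap_bot, ker_mkQ]
    exact hinj
  · rw [← range_eq_top, range_mapQ, map_mkQ_eq_top]
    exact hsurj

section BlowUpSquare

variable {R : Type*} [Ring R] {A' A B C' C D : Type*}
  [AddCommGroup A'] [Module R A'] [AddCommGroup A] [Module R A]
  [AddCommGroup B] [Module R B] [AddCommGroup C'] [Module R C']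
  [AddCommGroup C] [Module R C] [AddCommGroup D] [Module R D]
  {α'₁ : A' →ₗ[R] B} {α'₂ : A' →ₗ[R] C'} {α₁ : A →ₗ[R] B} {α₂ : A →ₗ[R] C}
  {β₁ : B →ₗ[R] D} {β'₂ : C' →ₗ[R] D} {β₂ : C →ₗ[R] D}
  {γ : A' →ₗ[R] A} {ψ : B →ₗ[R] B} {φ : C' →ₗ[R] C} {τ : D →ₗ[R] D}

theorem range_sup_range_eq_top_of_blowUp
    (hsurj' : Function.Surjective (coprod β₁ β'₂))
    (hexact : ker (coprod β₁ β₂) = range (α₁.prod α₂))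
    (hc3 : τ.comp β₁ = β₁.comp ψ) (hc4 : τ.comp β'₂ = β₂.comp φ)
    (hf : range β₂ ≤ range τ) :
    range φ ⊔ range α₂ = ⊤ := by
  refine eq_top_iff.2 fun c _ => ?_
  obtain ⟨d, hd⟩ := hf ⟨c, rfl⟩
  obtain ⟨⟨b, c'⟩, rfl⟩ := hsurj' d
  have hrow : β₁ (ψ b) + β₂ (φ c' - c) = 0 := by
    have hτ : τ (β₁ b) + τ (β'₂ c') = β₂ c := by simpa using hd
    rw [show τ (β₁ b) = β₁ (ψ b) from LinearMap.congr_fun hc3 b,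
      show τ (β'₂ c') = β₂ (φ c') from LinearMap.congr_fun hc4 c'] at hτ
    rw [map_sub, ← hτ]
    abel
  obtain ⟨a, -, ha⟩ := exists_apply_eq_of_ker_coprod_eq_range_prod hexact hrow
  exact mem_sup.2 ⟨φ c', ⟨c', rfl⟩, α₂ (-a), ⟨-a, rfl⟩, by rw [map_neg, ha]; abel⟩

theorem comap_range_le_range_of_blowUp
    (hexact' : ker (coprod β₁ β'₂) = range (α'₁.prod α'₂))
    (hinj : Function.Injective (α₁.prod α₂))
    (hexact : ker (coprod β₁ β₂) = range (α₁.prod α₂))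
    (hc1 : α₁.comp γ = ψ.comp α'₁) (hc2 : α₂.comp γ = φ.comp α'₂)
    (hc3 : τ.comp β₁ = β₁.comp ψ) (hc4 : τ.comp β'₂ = β₂.comp φ)
    (hd : ∀ d : D, τ d = 0 → ∃ b : B, ∃ c' : C', ψ b = 0 ∧ φ c' = 0 ∧ d = β₁ b + β'₂ c')
    (he : range α₁ ≤ range ψ) :
    comap α₂ (range φ) ≤ range γ := by
  rintro a ⟨c', hc'⟩
  obtain ⟨b, hb⟩ := he ⟨a, rfl⟩
  have hτ : τ (β₁ b + β'₂ c') = 0 := by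
    rw [map_add, show τ (β₁ b) = β₁ (ψ b) from LinearMap.congr_fun hc3 b,
      show τ (β'₂ c') = β₂ (φ c') from LinearMap.congr_fun hc4 c', hb, hc']
    exact add_apply_eq_zero_of_ker_coprod_eq_range_prod hexact a
  obtain ⟨b₀, c'₀, hb₀, hc'₀, hbc₀⟩ := hd _ hτ
  have hrow : β₁ (b - b₀) + β'₂ (c' - c'₀) = 0 := by
    rw [map_sub, map_sub, sub_add_sub_comm, hbc₀, sub_self]
  obtain ⟨a', ha'₁, ha'₂⟩ := exists_apply_eq_of_ker_coprod_eq_range_prod hexact' hrow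
  refine ⟨a', hinj (Prod.ext ?_ ?_)⟩
  · change α₁.comp γ a' = α₁ a
    rw [hc1, comp_apply, ha'₁, map_sub, hb₀, hb, sub_zero]
  · change α₂.comp γ a' = α₂ a
    rw [hc2, comp_apply, ha'₂, map_sub, hc'₀, hc', sub_zero]

end BlowUpSquare

theorem stmt0_general
    {R : Type*} [CommRing R]
    {A' A B C' C D : Type*}
    [AddCommGroup A'] [Module R A'] [AddCommGroup A] [Module R A]
    [AddCommGroup B] [Module R B] [AddCommGroup C'] [Module R C']
    [AddCommGroup C] [Module R C] [AddCommGroup D] [Module R D]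
    (α'₁ : A' →ₗ[R] B) (α'₂ : A' →ₗ[R] C')
    (α₁ : A →ₗ[R] B) (α₂ : A →ₗ[R] C)
    (β₁ : B →ₗ[R] D) (β'₂ : C' →ₗ[R] D) (β₂ : C →ₗ[R] D)
    (γ : A' →ₗ[R] A) (ψ : B →ₗ[R] B) (φ : C' →ₗ[R] C) (τ : D →ₗ[R] D)
    -- (a) exactness of 0 → A' → B ⊕ C' → D → 0
    (hsurj' : Function.Surjective (LinearMap.coprod β₁ β'₂))
    (hexact' : LinearMap.ker (LinearMap.coprod β₁ β'₂)
      = LinearMap.range (LinearMap.prod α'₁ α'₂))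
    -- (b) exactness of 0 → A → B ⊕ C → D → 0
    (hinj : Function.Injective (LinearMap.prod α₁ α₂))
    (hexact : LinearMap.ker (LinearMap.coprod β₁ β₂)
      = LinearMap.range (LinearMap.prod α₁ α₂))
    -- (c) commutativity of the diagram
    (hc1 : α₁.comp γ = ψ.comp α'₁)
    (hc2 : α₂.comp γ = φ.comp α'₂)
    (hc3 : τ.comp β₁ = β₁.comp ψ)
    (hc4 : τ.comp β'₂ = β₂.comp φ)
    -- (d) every element of ker τ comes from ker ψ and ker φ
    (hd : ∀ d : D, τ d = 0 → ∃ b : B, ∃ c' : C', ψ b = 0 ∧ φ c' = 0 ∧ d = β₁ b + β'₂ c')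
    -- (e) Im(α₁) ⊆ Im(ψ)
    (he : LinearMap.range α₁ ≤ LinearMap.range ψ)
    -- (f) Im(β₂) ⊆ Im(τ)
    (hf : LinearMap.range β₂ ≤ LinearMap.range τ) :
    Submodule.map α₂ (LinearMap.range γ) ≤ LinearMap.range φ ∧
    ∃ e : (A ⧸ LinearMap.range γ) ≃ₗ[R] (C ⧸ LinearMap.range φ),
      ∀ a : A, e (Submodule.Quotient.mk a) = Submodule.Quotient.mk (α₂ a) := by
  have hmap : map α₂ (range γ) ≤ range φ := by
    rw [← range_comp, hc2]
    exact range_comp_le_range α'₂ φ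
  have hbij := mapQ_bijective (map_le_iff_le_comap.1 hmap)
    (comap_range_le_range_of_blowUp hexact' hinj hexact hc1 hc2 hc3 hc4 hd he)
    (range_sup_range_eq_top_of_blowUp hsurj' hexact hc3 hc4 hf)
  exact ⟨hmap, LinearEquiv.ofBijective _ hbij, fun _ => rfl⟩

/-- Abstract snake-lemma diagram chase: the two rows are the blow-up exact
sequences `0 → A' → B ⊕ C' → D → 0` and `0 → A → B ⊕ C → D → 0`, and the
conclusion is the induced isomorphism `A/Im(γ) ≅ C/Im(φ)`. -/
theorem stmt0
    {R : Type*} [CommRing R]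
    {A' A B C' C D : Type*}
    [AddCommGroup A'] [Module R A'] [AddCommGroup A] [Module R A]
    [AddCommGroup B] [Module R B] [AddCommGroup C'] [Module R C']
    [AddCommGroup C] [Module R C] [AddCommGroup D] [Module R D]
    (α'₁ : A' →ₗ[R] B) (α'₂ : A' →ₗ[R] C')
    (α₁ : A →ₗ[R] B) (α₂ : A →ₗ[R] C)
    (β₁ : B →ₗ[R] D) (β'₂ : C' →ₗ[R] D) (β₂ : C →ₗ[R] D)
    (γ : A' →ₗ[R] A) (ψ : B →ₗ[R] B) (φ : C' →ₗ[R] C) (τ : D →ₗ[R] D)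
    -- (a) exactness of 0 → A' → B ⊕ C' → D → 0
    (hinj' : Function.Injective (LinearMap.prod α'₁ α'₂))
    (hsurj' : Function.Surjective (LinearMap.coprod β₁ β'₂))
    (hexact' : LinearMap.ker (LinearMap.coprod β₁ β'₂)
      = LinearMap.range (LinearMap.prod α'₁ α'₂))
    -- (b) exactness of 0 → A → B ⊕ C → D → 0
    (hinj : Function.Injective (LinearMap.prod α₁ α₂))
    (hsurj : Function.Surjective (LinearMap.coprod β₁ β₂))
    (hexact : LinearMap.ker (LinearMap.coprod β₁ β₂)
      = LinearMap.range (LinearMap.prod α₁ α₂))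
    -- (c) commutativity of the diagram
    (hc1 : α₁.comp γ = ψ.comp α'₁)
    (hc2 : α₂.comp γ = φ.comp α'₂)
    (hc3 : τ.comp β₁ = β₁.comp ψ)
    (hc4 : τ.comp β'₂ = β₂.comp φ)
    -- (d) every element of ker τ comes from ker ψ and ker φ
    (hd : ∀ d : D, τ d = 0 → ∃ b : B, ∃ c' : C', ψ b = 0 ∧ φ c' = 0 ∧ d = β₁ b + β'₂ c')
    -- (e) Im(α₁) ⊆ Im(ψ)
    (he : LinearMap.range α₁ ≤ LinearMap.range ψ)
    -- (f) Im(β₂) ⊆ Im(τ)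
    (hf : LinearMap.range β₂ ≤ LinearMap.range τ) :
    Submodule.map α₂ (LinearMap.range γ) ≤ LinearMap.range φ ∧
    ∃ e : (A ⧸ LinearMap.range γ) ≃ₗ[R] (C ⧸ LinearMap.range φ),
      ∀ a : A, e (Submodule.Quotient.mk a) = Submodule.Quotient.mk (α₂ a) :=
  stmt0_general α'₁ α'₂ α₁ α₂ β₁ β'₂ β₂ γ ψ φ τ hsurj' hexact' hinj hexact hc1 hc2 hc3 hc4 hd he hf
end

section
/- Let R be a commutative ring and let Z, E, V, Y be R-modules. Suppose given R-linear maps u : Z → E, v : E → Z, w : Z → E, i : E → Y, q : V → Y, r : Y → V such that: (a) v ∘ u = id_Z; (b) v ∘ w = 0; (c) every element of E can be written in the form w(b₁) + u(b₂) for some b₁, b₂ ∈ Z; (d) i ∘ u ∘ v = q ∘ r ∘ i; (e) q is injective; (f) the kernel of r is contained in the image of i. Then for every c ∈ Y with q(r(c)) = 0 there exists d ∈ E with u(v(d)) = 0 and c = i(d). -/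
theorem LinearMap.apply_sub_comp_apply_eq_zero_of_comp_eq_id {R M N : Type*} [Semiring R]
    [AddCommGroup M] [Module R M] [AddCommGroup N] [Module R N]
    {u : N →ₗ[R] M} {v : M →ₗ[R] N} (h : v.comp u = LinearMap.id) (e : M) :
    v (e - u (v e)) = 0 := by
  rw [map_sub, ← LinearMap.comp_apply v u, h, LinearMap.id_apply, sub_self]

/-- Lift `c` along `i` to some `e`, then subtract `u (v e)`, which has the same image under `v` and is killed by `i` because of `hd`. -/
theorem stmt1_general
    {R : Type*} [CommRing R]
    {Z E V Y : Type*}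
    [AddCommGroup Z] [Module R Z] [AddCommGroup E] [Module R E]
    [AddCommGroup V] [Module R V] [AddCommGroup Y] [Module R Y]
    (u : Z →ₗ[R] E) (v : E →ₗ[R] Z)
    (i : E →ₗ[R] Y) (q : V →ₗ[R] Y) (r : Y →ₗ[R] V)
    (ha : v.comp u = LinearMap.id)
    (hd : i.comp (u.comp v) = q.comp (r.comp i))
    (he : Function.Injective q)
    (hf : LinearMap.ker r ≤ LinearMap.range i) :
    ∀ c : Y, q (r c) = 0 → ∃ d : E, u (v d) = 0 ∧ c = i d := by
  intro c hqc
  have hrc : r c = 0 := (map_eq_zero_iff q he).mp hqc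
  obtain ⟨e, rfl⟩ := hf hrc
  have hi : i (u (v e)) = 0 := by
    rw [← LinearMap.comp_apply u v, ← LinearMap.comp_apply i, hd]
    exact hqc
  refine ⟨e - u (v e), ?_, ?_⟩
  · rw [LinearMap.apply_sub_comp_apply_eq_zero_of_comp_eq_id ha, map_zero]
  · rw [map_sub, hi, sub_zero]

/-- Abstract form of Lemma 3.8 (surjectivity of the arrow `g` in the snake
exact sequence). -/
theorem stmt1
    {R : Type*} [CommRing R]
    {Z E V Y : Type*}
    [AddCommGroup Z] [Module R Z] [AddCommGroup E] [Module R E]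
    [AddCommGroup V] [Module R V] [AddCommGroup Y] [Module R Y]
    (u : Z →ₗ[R] E) (v : E →ₗ[R] Z) (w : Z →ₗ[R] E)
    (i : E →ₗ[R] Y) (q : V →ₗ[R] Y) (r : Y →ₗ[R] V)
    (ha : v.comp u = LinearMap.id)
    (hb : v.comp w = 0)
    (hc : ∀ e : E, ∃ b₁ b₂ : Z, e = w b₁ + u b₂)
    (hd : i.comp (u.comp v) = q.comp (r.comp i))
    (he : Function.Injective q)
    (hf : LinearMap.ker r ≤ LinearMap.range i) :
    ∀ c : Y, q (r c) = 0 → ∃ d : E, u (v d) = 0 ∧ c = i d :=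
  stmt1_general u v i q r ha hd he hf
end
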